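/- arXiv:1711.04904 — 11 statements merged into one kernel-verified Lean document; each statement's English description precedes it below -/
import Mathlib

section
/- Let A be a Γ-graded ring with graded local units. Then A is strongly graded if and only if, for every γ ∈ Γ, every graded local unit of A lies in A_γ A_{γ⁻¹}. -/
/-- The product of two additive subgroups of a (possibly nonunital) ring: the additive
subgroup generated by all products `s * t` with `s ∈ S`, `t ∈ T`. -/
def AddSubgroup.gradeMul {R : Type*} [NonUnitalRing R] (S T : AddSubgroup R) : AddSubgroup R :=
  AddSubgroup.closure (Set.image2 (· * ·) (S : Set R) (T : Set R))

/-- Let `A` be a `Γ`-graded ring with graded local units `E ⊆ A_ε`.  Then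
`A` is strongly graded iff, for every `γ ∈ Γ`, every graded local unit lies in `A_γ A_{γ⁻¹}`. -/
theorem stmt1 {Γ R : Type*} [Group Γ] [DecidableEq Γ] [NonUnitalRing R]
    (A : Γ → AddSubgroup R)
    (hdecomp : DirectSum.IsInternal A)
    (hgraded : ∀ γ δ : Γ, AddSubgroup.gradeMul (A γ) (A δ) ≤ A (γ * δ))
    (E : Set R) (hE1 : E ⊆ (A 1 : Set R)) (hEidem : ∀ e ∈ E, e * e = e)
    (hElocal : ∀ F : Finset R, ∃ e ∈ E, ∀ x ∈ F, e * x * e = x) :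
    (∀ γ δ : Γ, AddSubgroup.gradeMul (A γ) (A δ) = A (γ * δ)) ↔
      (∀ γ : Γ, ∀ e ∈ E, e ∈ AddSubgroup.gradeMul (A γ) (A γ⁻¹)) := by
  constructor
  · intro hstrong γ e he
    rw [hstrong γ γ⁻¹]
    simpa using hE1 he
  · intro hloc γ δ
    refine le_antisymm (hgraded γ δ) ?_
    intro x hx
    obtain ⟨e, heE, hex⟩ := hElocal {x}
    have hxe : e * x * e = x := hex x (Finset.mem_singleton_self x)
    have he1 : e ∈ A 1 := hE1 heE
    have hmem : e ∈ AddSubgroup.gradeMul (A γ) (A γ⁻¹) := hloc γ e heE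
    have key : AddSubgroup.gradeMul (A γ) (A γ⁻¹) ≤
        (AddSubgroup.gradeMul (A γ) (A δ)).comap (AddMonoidHom.mulRight (x * e)) := by
      rw [AddSubgroup.gradeMul, AddSubgroup.closure_le]
      rintro _ ⟨a, ha, b, hb, rfl⟩
      simp only [SetLike.mem_coe, AddSubgroup.mem_comap, AddMonoidHom.coe_mulRight]
      have hbxe : b * x * e ∈ A δ := by
        have h1 : b * x ∈ A (γ⁻¹ * (γ * δ)) :=
          hgraded _ _ (AddSubgroup.subset_closure ⟨b, hb, x, hx, rfl⟩)
        have h2 : b * x * e ∈ A (γ⁻¹ * (γ * δ) * 1) :=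
          hgraded _ _ (AddSubgroup.subset_closure ⟨_, h1, e, he1, rfl⟩)
        simpa [inv_mul_cancel_left] using h2
      have hassoc : a * b * (x * e) = a * (b * x * e) := by
        rw [mul_assoc, ← mul_assoc b x e]
      rw [hassoc]
      exact AddSubgroup.subset_closure ⟨a, ha, _, hbxe, rfl⟩
    have hm := key hmem
    simp only [AddSubgroup.mem_comap, AddMonoidHom.coe_mulRight] at hm
    rwa [← mul_assoc, hxe] at hm
end

section
/- Let G be a Γ-graded topological groupoid, with grading given by a continuous functor κ: G → Γ and components G_γ = κ⁻¹(γ). The following are equivalent: (1) G is strongly graded (G_γ G_δ = G_{γδ} for all γ, δ); (2) G_γ G_{γ⁻¹} = G_ε for all γ; (3) d(G_γ) = G⁽⁰⁾ for all γ; (4) c(G_γ) = G⁽⁰⁾ for all γ. -/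
open CategoryTheory

/-- The total space of morphisms of a groupoid. -/
abbrev GrpdMor (Obj : Type*) [Groupoid Obj] := Σ x y : Obj, x ⟶ y

/-- The pointwise product of two sets of morphisms of a groupoid:
`S T = { st | s ∈ S, t ∈ T, (s,t) composable }`. -/
def morMul {Obj : Type*} [Groupoid Obj] (S T : Set (GrpdMor Obj)) : Set (GrpdMor Obj) :=
  {m | ∃ (x y z : Obj) (f : x ⟶ y) (g : y ⟶ z),
    (⟨x, y, f⟩ : GrpdMor Obj) ∈ S ∧ (⟨y, z, g⟩ : GrpdMor Obj) ∈ T ∧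
      m = ⟨x, z, f ≫ g⟩}

/-- Inversion on the space of morphisms. -/
def morInv {Obj : Type*} [Groupoid Obj] (m : GrpdMor Obj) : GrpdMor Obj :=
  ⟨m.2.1, m.1, Groupoid.inv m.2.2⟩

/-- Composition on the space of composable pairs of morphisms. -/
def morComp {Obj : Type*} [Groupoid Obj]
    (p : {p : GrpdMor Obj × GrpdMor Obj // p.1.2.1 = p.2.1}) : GrpdMor Obj :=
  ⟨p.1.1.1, p.1.2.2.1, p.1.1.2.2 ≫ eqToHom p.2 ≫ p.1.2.2.2⟩

/-- Let `G` be a `Γ`-graded topological groupoid with grading given by a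
continuous functor `κ : G → Γ` (each component `G_γ = κ⁻¹(γ)` is clopen).  TFAE:
(1) `G` is strongly graded; (2) `G_γ G_{γ⁻¹} = G_ε` for all `γ`;
(3) `d(G_γ) = G⁽⁰⁾` for all `γ`; (4) `c(G_γ) = G⁽⁰⁾` for all `γ`. -/
theorem stmt3 {Obj : Type*} [Groupoid Obj] {Γ : Type*} [Group Γ]
    [TopologicalSpace (GrpdMor Obj)]
    (κ : GrpdMor Obj → Γ)
    (hκid : ∀ x : Obj, κ ⟨x, x, 𝟙 x⟩ = 1)
    (hκcomp : ∀ (x y z : Obj) (f : x ⟶ y) (g : y ⟶ z),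
      κ ⟨x, z, f ≫ g⟩ = κ ⟨x, y, f⟩ * κ ⟨y, z, g⟩)
    (hclopen : ∀ γ : Γ, IsClopen (κ ⁻¹' {γ}))
    (hinv : Continuous (morInv (Obj := Obj)))
    (hcomp : Continuous (morComp (Obj := Obj))) :
    List.TFAE
      [∀ γ δ : Γ, morMul (κ ⁻¹' {γ}) (κ ⁻¹' {δ}) = κ ⁻¹' {γ * δ},
       ∀ γ : Γ, morMul (κ ⁻¹' {γ}) (κ ⁻¹' {γ⁻¹}) = κ ⁻¹' {(1 : Γ)},
       ∀ (γ : Γ) (x : Obj), ∃ (y : Obj) (f : y ⟶ x), κ ⟨y, x, f⟩ = γ,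
       ∀ (γ : Γ) (x : Obj), ∃ (y : Obj) (f : x ⟶ y), κ ⟨x, y, f⟩ = γ] := by
  have κinv : ∀ (x y : Obj) (f : x ⟶ y),
      κ ⟨y, x, Groupoid.inv f⟩ = (κ ⟨x, y, f⟩)⁻¹ := by
    intro x y f
    have h := hκcomp x y x f (Groupoid.inv f)
    rw [Groupoid.comp_inv, hκid] at h
    exact (inv_eq_of_mul_eq_one_right h.symm).symm
  tfae_have 1 → 2 := by
    intro h γ
    simpa using h γ γ⁻¹
  tfae_have 2 → 3 := by
    intro h γ x
    have hx : (⟨x, x, 𝟙 x⟩ : GrpdMor Obj) ∈ morMul (κ ⁻¹' {γ⁻¹}) (κ ⁻¹' {(γ⁻¹)⁻¹}) := by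
      rw [h γ⁻¹]
      simpa using hκid x
    obtain ⟨a, b, c, f, g, hf, hg, heq⟩ := hx
    obtain ⟨rfl, h2⟩ := Sigma.mk.inj_iff.mp heq
    obtain ⟨rfl, _⟩ := Sigma.mk.inj_iff.mp (eq_of_heq h2)
    exact ⟨b, g, by simpa using hg⟩
  tfae_have 3 → 4 := by
    intro h γ x
    obtain ⟨y, f, hf⟩ := h γ⁻¹ x
    exact ⟨y, Groupoid.inv f, by rw [κinv, hf, inv_inv]⟩
  tfae_have 4 → 1 := by
    intro h γ δ
    ext m
    obtain ⟨x, z, mor⟩ := m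
    constructor
    · rintro ⟨a, b, c, f, g, hf, hg, heq⟩
      obtain ⟨rfl, h2⟩ := Sigma.mk.inj_iff.mp heq
      obtain ⟨rfl, h3⟩ := Sigma.mk.inj_iff.mp (eq_of_heq h2)
      obtain rfl := eq_of_heq h3
      simp only [Set.mem_preimage, Set.mem_singleton_iff] at hf hg ⊢
      rw [hκcomp, hf, hg]
    · intro hm
      simp only [Set.mem_preimage, Set.mem_singleton_iff] at hm
      obtain ⟨y, f, hf⟩ := h γ x
      refine ⟨x, y, z, f, Groupoid.inv f ≫ mor, by simpa using hf, ?_, ?_⟩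
      · simp only [Set.mem_preimage, Set.mem_singleton_iff]
        rw [hκcomp y x z (Groupoid.inv f) mor, κinv, hf, hm]
        group
      · congr 1
        rw [← Category.assoc, Groupoid.comp_inv, Category.id_comp]
  tfae_finish
end

section
/- Let G be a Γ-graded topological groupoid and Ω a normal subgroup of Γ. Then G is strongly Γ-graded if and only if G is strongly Γ/Ω-graded (with components G_{Ωγ} = ⊔_{ω∈Ω} G_{ωγ}) and the open subgroupoid G_Ω = ⊔_{ω∈Ω} G_ω is strongly Ω-graded. -/
open CategoryTheory

/-- Let `G` be a `Γ`-graded topological groupoid and `Ω ⊴ Γ`.  Then `G` is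
strongly `Γ`-graded iff `G` is strongly `Γ/Ω`-graded (with components
`G_{Ωγ} = ⊔_{ω ∈ Ω} G_{ωγ}`, i.e. the fibres of `Γ → Γ/Ω` composed with `κ`) and the open
subgroupoid `G_Ω = ⊔_{ω ∈ Ω} G_ω` is strongly `Ω`-graded. -/
theorem stmt4 {Obj : Type*} [Groupoid Obj] {Γ : Type*} [Group Γ]
    (Ω : Subgroup Γ) [Ω.Normal]
    [TopologicalSpace (GrpdMor Obj)]
    (κ : GrpdMor Obj → Γ)
    (hκid : ∀ x : Obj, κ ⟨x, x, 𝟙 x⟩ = 1)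
    (hκcomp : ∀ (x y z : Obj) (f : x ⟶ y) (g : y ⟶ z),
      κ ⟨x, z, f ≫ g⟩ = κ ⟨x, y, f⟩ * κ ⟨y, z, g⟩)
    (hclopen : ∀ γ : Γ, IsClopen (κ ⁻¹' {γ}))
    (hinv : Continuous (morInv (Obj := Obj)))
    (hcomp : Continuous (morComp (Obj := Obj))) :
    (∀ γ δ : Γ, morMul (κ ⁻¹' {γ}) (κ ⁻¹' {δ}) = κ ⁻¹' {γ * δ}) ↔
      ((∀ q r : Γ ⧸ Ω,
          morMul (((QuotientGroup.mk : Γ → Γ ⧸ Ω) ∘ κ) ⁻¹' {q})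
              (((QuotientGroup.mk : Γ → Γ ⧸ Ω) ∘ κ) ⁻¹' {r})
            = ((QuotientGroup.mk : Γ → Γ ⧸ Ω) ∘ κ) ⁻¹' {q * r}) ∧
        (∀ ω₁ ω₂ : Ω,
          morMul (κ ⁻¹' {(ω₁ : Γ)}) (κ ⁻¹' {(ω₂ : Γ)}) = κ ⁻¹' {((ω₁ * ω₂ : Ω) : Γ)})) := by
  constructor
  · intro hs
    refine ⟨fun q r => ?_, fun ω₁ ω₂ => ?_⟩
    · ext m
      constructor
      · rintro ⟨x, y, z, f, g, hf, hg, rfl⟩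
        simp only [Set.mem_preimage, Function.comp_apply, Set.mem_singleton_iff] at hf hg ⊢
        rw [hκcomp, QuotientGroup.mk_mul, hf, hg]
      · intro hm
        simp only [Set.mem_preimage, Function.comp_apply, Set.mem_singleton_iff] at hm
        obtain ⟨γ, rfl⟩ := QuotientGroup.mk_surjective q
        have hmem : m ∈ morMul (κ ⁻¹' {γ}) (κ ⁻¹' {γ⁻¹ * κ m}) := by
          rw [hs]
          simp
        obtain ⟨x, y, z, f, g, hf, hg, hm'⟩ := hmem
        simp only [Set.mem_preimage, Set.mem_singleton_iff] at hf hg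
        refine ⟨x, y, z, f, g, ?_, ?_, hm'⟩
        · simp [hf]
        · simp only [Set.mem_preimage, Function.comp_apply, Set.mem_singleton_iff]
          rw [hg, QuotientGroup.mk_mul, hm, ← mul_assoc]
          simp
    · rw [hs (ω₁ : Γ) (ω₂ : Γ)]
      norm_cast
  · rintro ⟨hq, hΩ⟩ γ δ
    ext m
    constructor
    · rintro ⟨x, y, z, f, g, hf, hg, rfl⟩
      simp only [Set.mem_preimage, Set.mem_singleton_iff] at hf hg ⊢
      rw [hκcomp, hf, hg]
    · intro hm
      simp only [Set.mem_preimage, Set.mem_singleton_iff] at hm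
      have hmem : m ∈ morMul (((QuotientGroup.mk : Γ → Γ ⧸ Ω) ∘ κ) ⁻¹' {(γ : Γ ⧸ Ω)})
          (((QuotientGroup.mk : Γ → Γ ⧸ Ω) ∘ κ) ⁻¹' {(δ : Γ ⧸ Ω)}) := by
        rw [hq]
        simp [hm]
      obtain ⟨x, y, z, f, g, hf, hg, rfl⟩ := hmem
      simp only [Set.mem_preimage, Function.comp_apply, Set.mem_singleton_iff] at hf hg hm
      rw [hκcomp] at hm
      have hω : (κ (⟨x, y, f⟩ : GrpdMor Obj))⁻¹ * γ ∈ Ω := QuotientGroup.eq.mp hf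
      have hid : (⟨y, y, 𝟙 y⟩ : GrpdMor Obj) ∈
          morMul (κ ⁻¹' {((⟨_, hω⟩ : Ω) : Γ)}) (κ ⁻¹' {(((⟨_, hω⟩ : Ω)⁻¹ : Ω) : Γ)}) := by
        rw [hΩ]
        simp [hκid]
      obtain ⟨x', y', z', a, b, ha, hb, he⟩ := hid
      obtain ⟨h1, h2⟩ := Sigma.mk.inj_iff.mp he
      subst h1
      obtain ⟨h3, h4⟩ := Sigma.mk.inj_iff.mp (eq_of_heq h2)
      subst h3
      have hab : a ≫ b = 𝟙 y := (eq_of_heq h4).symm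
      simp only [Set.mem_preimage, Set.mem_singleton_iff] at ha hb
      refine ⟨x, y', z, f ≫ a, b ≫ g, ?_, ?_, ?_⟩
      · simp only [Set.mem_preimage, Set.mem_singleton_iff]
        rw [hκcomp, ha]
        group
      · simp only [Set.mem_preimage, Set.mem_singleton_iff]
        have hgval : κ (⟨y, z, g⟩ : GrpdMor Obj) = (κ (⟨x, y, f⟩ : GrpdMor Obj))⁻¹ * (γ * δ) := by
          rw [← hm]; group
        rw [hκcomp, hb, hgval]
        push_cast
        group
      · have hcompo : (f ≫ a) ≫ b ≫ g = f ≫ g := by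
          rw [Category.assoc, ← Category.assoc a b g, hab, Category.id_comp]
        rw [hcompo]
end

section
/- Let G be a Γ-graded étale groupoid and E a graded G-sheaf of R-modules. For each γ ∈ Γ, the projection π_γ: E → E_γ sending each element e of a stalk E_x to its γ-homogeneous component e_γ is continuous. -/
open CategoryTheory

private lemma sigmaEqOfFst {Obj : Type*} {M : Obj → Type*} (e : Σ x, M x) {u : Obj}
    (h : e.1 = u) : e = ⟨u, cast (congrArg M h) e.2⟩ := by
  cases e; subst h; rfl

private lemma castMem {Obj Γ' R : Type*} [CommRing R] {M : Obj → Type*}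
    [∀ x, AddCommGroup (M x)] [∀ x, Module R (M x)]
    (D : ∀ x : Obj, Γ' → Submodule R (M x)) {x y : Obj} (h : x = y) {γ : Γ'} {m : M x}
    (hm : m ∈ D x γ) : cast (congrArg M h) m ∈ D y γ := by subst h; exact hm

private lemma contOnSubtypeMk {X Y : Type*} [TopologicalSpace X] [TopologicalSpace Y]
    {p : Y → Prop} {f : X → Y} {s : Set X} (h : ContinuousOn f s) (hp : ∀ x, p (f x)) :
    ContinuousOn (fun x => (⟨f x, hp x⟩ : Subtype p)) s := by
  rw [continuousOn_iff_continuous_restrict] at h ⊢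
  exact h.subtype_mk _

/-- Existence of local continuous sections through a homogeneous point, with values
in the given homogeneous component. -/
private lemma sectionExists {Obj : Type*} [TopologicalSpace Obj] {Γ' R : Type*} [CommRing R]
    (M : Obj → Type*) [∀ x, AddCommGroup (M x)] [∀ x, Module R (M x)]
    [TopologicalSpace (Σ x, M x)]
    (hp : IsLocalHomeomorph (Sigma.fst : (Σ x, M x) → Obj))
    (D : ∀ x : Obj, Γ' → Submodule R (M x))
    (hopen : ∀ γ : Γ', IsOpen {e : Σ x, M x | e.2 ∈ D e.1 γ})
    (x0 : Obj) (δ : Γ') (m : M x0) (hm : m ∈ D x0 δ) :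
    ∃ (U : Set Obj) (σ : ∀ u, M u), IsOpen U ∧ x0 ∈ U ∧ σ x0 = m ∧
      (∀ u ∈ U, σ u ∈ D u δ) ∧ ContinuousOn (fun u => (⟨u, σ u⟩ : Σ x, M x)) U := by
  classical
  obtain ⟨φ, hmemφ, hφ⟩ := hp ⟨x0, m⟩
  set σ : ∀ u, M u := fun u =>
    if h : (φ.symm u).1 = u then cast (congrArg M h) (φ.symm u).2 else 0 with hσ
  have hfst : ∀ u ∈ φ.target, (φ.symm u).1 = u := by
    intro u hu
    have h1 : Sigma.fst (φ.symm u) = φ (φ.symm u) := congrFun hφ (φ.symm u)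
    rw [h1, φ.right_inv hu]
  have hsymm : ∀ u ∈ φ.target, (⟨u, σ u⟩ : Σ x, M x) = φ.symm u := by
    intro u hu
    have h1 := hfst u hu
    rw [hσ]
    simp only [dif_pos h1]
    exact (sigmaEqOfFst (φ.symm u) h1).symm
  have hφx0 : φ ⟨x0, m⟩ = x0 := (congrFun hφ ⟨x0, m⟩).symm
  have hx0t : x0 ∈ φ.target := hφx0 ▸ φ.map_source hmemφ
  have hsymmx0 : φ.symm x0 = ⟨x0, m⟩ := by
    have h2 := φ.left_inv hmemφ
    rw [hφx0] at h2
    exact h2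
  have hσx0 : σ x0 = m := by
    have := hsymm x0 hx0t
    rw [hsymmx0] at this
    exact eq_of_heq (Sigma.mk.inj_iff.mp this).2
  have hcont : ContinuousOn (fun u => (⟨u, σ u⟩ : Σ x, M x)) φ.target :=
    φ.continuousOn_symm.congr hsymm
  set U : Set Obj := φ.target ∩ (fun u => (⟨u, σ u⟩ : Σ x, M x)) ⁻¹' {e | e.2 ∈ D e.1 δ}
    with hU
  refine ⟨U, σ, hcont.isOpen_inter_preimage φ.open_target (hopen δ), ⟨hx0t, ?_⟩, hσx0,
    fun u hu => hu.2, hcont.mono Set.inter_subset_left⟩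
  show σ x0 ∈ D x0 δ
  rw [hσx0]; exact hm

/-- Continuity of finite sums of sections. -/
private lemma sumCont {Obj : Type*} [TopologicalSpace Obj] {Γ' : Type*}
    (M : Obj → Type*) [∀ x, AddCommGroup (M x)]
    [TopologicalSpace (Σ x, M x)]
    (hzero : Continuous (fun x : Obj => (⟨x, 0⟩ : Σ x, M x)))
    (hadd : Continuous (fun q : {q : (Σ x, M x) × (Σ x, M x) // q.1.1 = q.2.1} =>
      (⟨q.1.1.1, q.1.1.2 + cast (congrArg M q.prop.symm) q.1.2.2⟩ : Σ x, M x)))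
    (T : Finset Γ') (σ : Γ' → ∀ u, M u) (U : Set Obj)
    (h : ∀ δ ∈ T, ContinuousOn (fun u => (⟨u, σ δ u⟩ : Σ x, M x)) U) :
    ContinuousOn (fun u => (⟨u, ∑ δ ∈ T, σ δ u⟩ : Σ x, M x)) U := by
  classical
  induction T using Finset.induction with
  | empty => simpa using hzero.continuousOn
  | @insert a T ha ih =>
    have h1 : ContinuousOn (fun u => (⟨u, σ a u⟩ : Σ x, M x)) U := h a (Finset.mem_insert_self a T)
    have h2 : ContinuousOn (fun u => (⟨u, ∑ δ ∈ T, σ δ u⟩ : Σ x, M x)) U :=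
      ih (fun δ hδ => h δ (Finset.mem_insert_of_mem hδ))
    have h3 : ContinuousOn (fun u =>
        (⟨((⟨u, σ a u⟩ : Σ x, M x), (⟨u, ∑ δ ∈ T, σ δ u⟩ : Σ x, M x)), rfl⟩ :
          {q : (Σ x, M x) × (Σ x, M x) // q.1.1 = q.2.1})) U :=
      contOnSubtypeMk (h1.prodMk h2) _
    have h4 := hadd.comp_continuousOn h3
    simp only [Finset.sum_insert ha]
    exact h4


/-- Let `G` be a `Γ`-graded étale groupoid and `E` a graded `G`-sheaf of
`R`-modules.  For each `γ ∈ Γ`, the projection `π_γ : E → E_γ`, sending each element `e` of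
a stalk `E_x` to its `γ`-homogeneous component `e_γ`, is continuous.

Here the sheaf space is modelled as `Σ x, M x` over the unit space `Obj`, with `Sigma.fst`
a local homeomorphism, continuous zero section, addition and (discrete) scalar
multiplication, a continuous right action of `G` by `R`-homomorphisms on stalks, and a
grading `D x : Γ → Submodule R (M x)` of each stalk with each `E_γ` open and
`E_α G_β ⊆ E_{αβ}`. -/
theorem stmt5 {Obj : Type*} [Groupoid Obj] [TopologicalSpace Obj]
    [TopologicalSpace (GrpdMor Obj)]
    {Γ : Type*} [Group Γ] [DecidableEq Γ] {R : Type*} [CommRing R]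
    -- `G` is a topological, étale groupoid:
    (hinvG : Continuous (morInv (Obj := Obj)))
    (hcompG : Continuous (morComp (Obj := Obj)))
    (hetale : IsLocalHomeomorph (fun m : GrpdMor Obj => m.2.1))
    -- the grading of `G`:
    (κ : GrpdMor Obj → Γ)
    (hκid : ∀ x : Obj, κ ⟨x, x, 𝟙 x⟩ = 1)
    (hκcomp : ∀ (x y z : Obj) (f : x ⟶ y) (g : y ⟶ z),
      κ ⟨x, z, f ≫ g⟩ = κ ⟨x, y, f⟩ * κ ⟨y, z, g⟩)
    (hclopen : ∀ γ : Γ, IsClopen (κ ⁻¹' {γ}))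
    -- the sheaf of `R`-modules `E = Σ x, M x` over the unit space:
    (M : Obj → Type*) [∀ x, AddCommGroup (M x)] [∀ x, Module R (M x)]
    [TopologicalSpace (Σ x, M x)]
    (hp : IsLocalHomeomorph (Sigma.fst : (Σ x, M x) → Obj))
    (hzero : Continuous (fun x : Obj => (⟨x, 0⟩ : Σ x, M x)))
    (hadd : Continuous (fun q : {q : (Σ x, M x) × (Σ x, M x) // q.1.1 = q.2.1} =>
      (⟨q.1.1.1, q.1.1.2 + cast (congrArg M q.prop.symm) q.1.2.2⟩ : Σ x, M x)))
    (hsmul : ∀ r : R, Continuous (fun e : Σ x, M x => (⟨e.1, r • e.2⟩ : Σ x, M x)))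
    -- the right `G`-action on `E` (written as a left map `act g : E_{c g} → E_{d g}`):
    (act : ∀ x y : Obj, (x ⟶ y) → M x → M y)
    (hact_id : ∀ x : Obj, act x x (𝟙 x) = id)
    (hact_comp : ∀ (x y z : Obj) (f : x ⟶ y) (g : y ⟶ z),
      act x z (f ≫ g) = (act y z g) ∘ (act x y f))
    (hact_add : ∀ (x y : Obj) (g : x ⟶ y) (m m' : M x),
      act x y g (m + m') = act x y g m + act x y g m')
    (hact_smul : ∀ (x y : Obj) (g : x ⟶ y) (r : R) (m : M x),
      act x y g (r • m) = r • act x y g m)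
    (hact_cont : Continuous
      (fun q : {q : (Σ x, M x) × GrpdMor Obj // q.1.1 = q.2.1} =>
        (⟨q.1.2.2.1, act q.1.2.1 q.1.2.2.1 q.1.2.2.2
            (cast (congrArg M q.prop) q.1.1.2)⟩ : Σ x, M x)))
    -- the grading of the sheaf:
    (D : ∀ x : Obj, Γ → Submodule R (M x))
    (hinternal : ∀ x : Obj, DirectSum.IsInternal (D x))
    (hopen : ∀ γ : Γ, IsOpen {e : Σ x, M x | e.2 ∈ D e.1 γ})
    (hcompat : ∀ (x y : Obj) (g : x ⟶ y) (α : Γ), ∀ m ∈ D x α,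
      act x y g m ∈ D y (α * κ ⟨x, y, g⟩)) :
    -- conclusion: the projection onto the `γ`-homogeneous component is continuous
    ∀ (γ : Γ) (π : (Σ x, M x) → Σ x, M x)
      (hfst : ∀ e, (π e).1 = e.1)
      (hmem : ∀ e, (π e).2 ∈ D (π e).1 γ)
      (hproj : ∀ e, e.2 - cast (congrArg M (hfst e)) (π e).2 ∈ ⨆ δ ∈ {δ : Γ | δ ≠ γ}, D e.1 δ),
      Continuous π := by
  classical
  intro γ π hfst hmem hproj
  rw [continuous_iff_continuousAt]
  rintro ⟨x0, m0⟩
  -- decompose m0 into homogeneous components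
  obtain ⟨f, hf⟩ := (hinternal x0).surjective m0
  set T : Finset Γ := insert γ (DFinsupp.support f) with hT
  have hγT : γ ∈ T := Finset.mem_insert_self γ _
  have hdecomp : m0 = ∑ δ ∈ T, ((f δ : M x0)) := by
    rw [← hf, DirectSum.coeAddMonoidHom_eq_dfinsuppSum]
    exact Finset.sum_subset (Finset.subset_insert γ _)
      (fun i _ hi => by
        rw [DFinsupp.notMem_support_iff.mp hi]; rfl)
  -- choose local sections through each component
  have hsec := fun δ : Γ => sectionExists M hp D hopen x0 δ (f δ : M x0) (f δ).2
  choose U σ hUopen hx0U hσx0 hσmem hσcont using hsec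
  set V : Set Obj := ⋂ δ ∈ T, U δ with hV
  have hVopen : IsOpen V := isOpen_biInter_finset (fun δ _ => hUopen δ)
  have hx0V : x0 ∈ V := Set.mem_biInter (fun δ _ => hx0U δ)
  have hVsub : ∀ δ ∈ T, V ⊆ U δ := fun δ hδ => Set.biInter_subset_of_mem hδ
  -- the total section
  set s : Obj → Σ x, M x := fun u => ⟨u, ∑ δ ∈ T, σ δ u⟩ with hs
  have hscont : ContinuousOn s V :=
    sumCont M hzero hadd T σ V (fun δ hδ => (hσcont δ).mono (hVsub δ hδ))
  have hs0 : s x0 = ⟨x0, m0⟩ := by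
    rw [hs]
    simp only [hσx0]
    rw [← hdecomp]
  -- local homeomorphism at the base point
  obtain ⟨φ, heφ, hφ⟩ := hp ⟨x0, m0⟩
  set V' : Set Obj := V ∩ s ⁻¹' φ.source with hV'
  have hV'open : IsOpen V' := hscont.isOpen_inter_preimage hVopen φ.open_source
  have hx0V' : x0 ∈ V' := ⟨hx0V, by rw [Set.mem_preimage, hs0]; exact heφ⟩
  set W : Set (Σ x, M x) := φ.source ∩ Sigma.fst ⁻¹' V' with hW
  have hWopen : IsOpen W :=
    φ.open_source.inter (hV'open.preimage hp.continuous)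
  have he0W : (⟨x0, m0⟩ : Σ x, M x) ∈ W := ⟨heφ, hx0V'⟩
  -- on W, every point equals the value of the total section over its base point
  have hkey : ∀ e' ∈ W, e' = s e'.1 := by
    rintro e' ⟨he1, he2⟩
    have hu : e'.1 ∈ V' := he2
    have hφs : φ (s e'.1) = e'.1 := (congrFun hφ (s e'.1)).symm
    have hφe : φ e' = e'.1 := (congrFun hφ e').symm
    have h1 : φ.symm e'.1 = s e'.1 := by
      have := φ.left_inv hu.2
      rw [hφs] at this
      exact this
    have h2 : φ.symm e'.1 = e' := by
      have := φ.left_inv he1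
      rw [hφe] at this
      exact this
    rw [← h1, h2]
  -- on W, π agrees with the section through the γ-component
  have heqW : ∀ e' ∈ W, π e' = ⟨e'.1, σ γ e'.1⟩ := by
    rintro ⟨x, m⟩ hW'
    have hxV : x ∈ V := hW'.2.1
    have hm : m = ∑ δ ∈ T, σ δ x := by
      have := hkey ⟨x, m⟩ hW'
      exact eq_of_heq (Sigma.mk.inj_iff.mp this).2
    set b : M x := cast (congrArg M (hfst ⟨x, m⟩)) (π ⟨x, m⟩).2 with hb
    have hbD : b ∈ D x γ := castMem D (hfst ⟨x, m⟩) (hmem ⟨x, m⟩)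
    have hbsup : m - b ∈ ⨆ δ ∈ {δ : Γ | δ ≠ γ}, D x δ := hproj ⟨x, m⟩
    have haD : σ γ x ∈ D x γ := hσmem γ x (hVsub γ hγT hxV)
    have hasup : m - σ γ x ∈ ⨆ δ ∈ {δ : Γ | δ ≠ γ}, D x δ := by
      have h5 : m - σ γ x = ∑ δ ∈ T.erase γ, σ δ x := by
        rw [hm, ← Finset.add_sum_erase T (fun δ => σ δ x) hγT]
        abel
      rw [h5]
      refine Submodule.sum_mem _ (fun δ hδ => ?_)
      have hδγ : δ ≠ γ := Finset.ne_of_mem_erase hδ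
      have hδT : δ ∈ T := Finset.mem_of_mem_erase hδ
      exact le_biSup (fun δ => D x δ) (show δ ∈ {δ : Γ | δ ≠ γ} from hδγ)
        (hσmem δ x (hVsub δ hδT hxV))
    -- uniqueness of the γ-component
    have hdisj : Disjoint (D x γ) (⨆ δ ∈ {δ : Γ | δ ≠ γ}, D x δ) :=
      (hinternal x).submodule_iSupIndep γ
    have hzero' : b - σ γ x = 0 := by
      refine Submodule.disjoint_def.mp hdisj _ (sub_mem hbD haD) ?_
      have : b - σ γ x = (m - σ γ x) - (m - b) := by abel
      rw [this]
      exact sub_mem hasup hbsup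
    have hba : b = σ γ x := sub_eq_zero.mp hzero'
    have h6 := sigmaEqOfFst (π ⟨x, m⟩) (hfst ⟨x, m⟩)
    rw [h6, ← hba]
  -- conclude continuity at the point
  have hcγ : ContinuousAt (fun e : Σ x, M x => (⟨e.1, σ γ e.1⟩ : Σ x, M x)) ⟨x0, m0⟩ := by
    have h7 : ContinuousAt (fun u => (⟨u, σ γ u⟩ : Σ x, M x)) x0 :=
      (hσcont γ).continuousAt ((hUopen γ).mem_nhds (hx0U γ))
    exact h7.comp (x := (⟨x0, m0⟩ : Σ x, M x)) hp.continuous.continuousAt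
  exact hcγ.congr (Filter.eventuallyEq_of_mem (hWopen.mem_nhds he0W)
    (fun e' he' => (heqW e' he').symm))
end

section
/- Let G be a Γ-graded ample groupoid and R a commutative unital ring. If the Steinberg algebra A_R(G) is strongly Γ-graded, then G is strongly graded; equivalently, if G is not strongly graded then there exist γ, δ ∈ Γ with A_R(G)_γ * A_R(G)_δ ≠ A_R(G)_{γδ}. -/
open CategoryTheory

/-- A bisection: a set of morphisms on which both the domain and the codomain map are
injective. -/
def IsBisection {Obj : Type*} [Groupoid Obj] (B : Set (GrpdMor Obj)) : Prop :=
  Set.InjOn (fun m => m.1) B ∧ Set.InjOn (fun m => m.2.1) B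

/-- A compact open bisection. -/
def IsCOB {Obj : Type*} [Groupoid Obj] [TopologicalSpace (GrpdMor Obj)]
    (B : Set (GrpdMor Obj)) : Prop :=
  IsCompact B ∧ IsOpen B ∧ IsBisection B

/-- The convolution product of two functions on the morphism space:
`(f * g)(m) = Σ_{m = m₁ m₂} f(m₁) g(m₂)` (a finite sum for elements of the Steinberg
algebra; `finsum` is zero if the family is not finitely supported). -/
noncomputable def conv {Obj : Type*} [Groupoid Obj] {R : Type*} [CommRing R]
    (f g : GrpdMor Obj → R) : GrpdMor Obj → R :=
  fun m => ∑ᶠ q ∈ {q : GrpdMor Obj × GrpdMor Obj |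
    ∃ h : q.1.2.1 = q.2.1, morComp ⟨q, h⟩ = m}, f q.1 * g q.2

/-- The Steinberg algebra `A_R(G)`: the `R`-span of the characteristic functions of compact
open bisections, inside the functions `G → R`. -/
noncomputable def steinberg (Obj : Type*) [Groupoid Obj] [TopologicalSpace (GrpdMor Obj)]
    (R : Type*) [CommRing R] : Submodule R (GrpdMor Obj → R) :=
  Submodule.span R {f | ∃ B : Set (GrpdMor Obj), IsCOB B ∧ f = Set.indicator B 1}

/-- The submodule of functions supported in a given set `S`. -/
def suppIn {Obj : Type*} [Groupoid Obj] (R : Type*) [CommRing R]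
    (S : Set (GrpdMor Obj)) : Submodule R (GrpdMor Obj → R) where
  carrier := {f | ∀ m, f m ≠ 0 → m ∈ S}
  zero_mem' := fun m h => absurd rfl h
  add_mem' := by
    intro a b ha hb m hm
    by_cases h : a m = 0
    · exact hb m (by simpa [h] using hm)
    · exact ha m h
  smul_mem' := by
    intro r a ha m hm
    refine ha m fun h => hm ?_
    simp [h]

/-- The `γ`-homogeneous component of the Steinberg algebra:
`A_R(G)_γ = {f ∈ A_R(G) | supp f ⊆ G_γ}`. -/
noncomputable def steinbergComp {Obj : Type*} [Groupoid Obj]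
    [TopologicalSpace (GrpdMor Obj)] (R : Type*) [CommRing R]
    {Γ : Type*} (κ : GrpdMor Obj → Γ) (γ : Γ) : Submodule R (GrpdMor Obj → R) :=
  steinberg Obj R ⊓ suppIn R (κ ⁻¹' {γ})

/-- The product of two submodules of the convolution algebra: the span of pairwise
convolutions. -/
noncomputable def convMul {Obj : Type*} [Groupoid Obj] {R : Type*} [CommRing R]
    (S T : Submodule R (GrpdMor Obj → R)) : Submodule R (GrpdMor Obj → R) :=
  Submodule.span R (Set.image2 conv (S : Set (GrpdMor Obj → R)) (T : Set (GrpdMor Obj → R)))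

/-- Let `G` be a `Γ`-graded ample groupoid and `R` a (nontrivial)
commutative unital ring.  If the Steinberg algebra `A_R(G)` is strongly `Γ`-graded, then
`G` is strongly graded. -/
theorem stmt7 {Obj : Type*} [Groupoid Obj] [TopologicalSpace (GrpdMor Obj)]
    {Γ : Type*} [Group Γ] {R : Type*} [CommRing R] [Nontrivial R]
    -- topological groupoid structure
    (hinvG : Continuous (morInv (Obj := Obj)))
    (hcompG : Continuous (morComp (Obj := Obj)))
    -- ample: a basis of compact open bisections, Hausdorff unit space
    (hbasis : ∀ (m : GrpdMor Obj) (U : Set (GrpdMor Obj)), IsOpen U → m ∈ U →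
      ∃ B, IsCOB B ∧ m ∈ B ∧ B ⊆ U)
    (hT2 : T2Space {m : GrpdMor Obj // ∃ x : Obj, m = ⟨x, x, 𝟙 x⟩})
    -- the grading of `G`
    (κ : GrpdMor Obj → Γ)
    (hκid : ∀ x : Obj, κ ⟨x, x, 𝟙 x⟩ = 1)
    (hκcomp : ∀ (x y z : Obj) (f : x ⟶ y) (g : y ⟶ z),
      κ ⟨x, z, f ≫ g⟩ = κ ⟨x, y, f⟩ * κ ⟨y, z, g⟩)
    (hclopen : ∀ γ : Γ, IsClopen (κ ⁻¹' {γ}))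
    -- `A_R(G)` is strongly graded
    (hstrongA : ∀ γ δ : Γ,
      convMul (steinbergComp R κ γ) (steinbergComp R κ δ) = steinbergComp R κ (γ * δ)) :
    ∀ γ δ : Γ, morMul (κ ⁻¹' {γ}) (κ ⁻¹' {δ}) = κ ⁻¹' {γ * δ} := by
  intro γ δ
  apply Set.Subset.antisymm
  · rintro m ⟨x, y, z, f, g, hf, hg, rfl⟩
    simp only [Set.mem_preimage, Set.mem_singleton_iff] at *
    rw [hκcomp, hf, hg]
  · intro m hm
    obtain ⟨B, hB, hmB, hBsub⟩ := hbasis m (κ ⁻¹' {γ * δ}) (hclopen _).isOpen hm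
    have hFmem : Set.indicator B (1 : GrpdMor Obj → R) ∈ steinbergComp R κ (γ * δ) := by
      constructor
      · exact Submodule.subset_span ⟨B, hB, rfl⟩
      · intro m' hm'
        apply hBsub
        by_contra h
        exact hm' (Set.indicator_of_notMem h 1)
    rw [← hstrongA γ δ] at hFmem
    have hFm : Set.indicator B (1 : GrpdMor Obj → R) m ≠ 0 := by
      rw [Set.indicator_of_mem hmB]; exact one_ne_zero
    have hgen : ∃ g ∈ Set.image2 conv ((steinbergComp R κ γ : Submodule R (GrpdMor Obj → R)) : Set (GrpdMor Obj → R))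
        ((steinbergComp R κ δ : Submodule R (GrpdMor Obj → R)) : Set (GrpdMor Obj → R)), g m ≠ 0 := by
      by_contra h
      push_neg at h
      have hle : Set.image2 conv ((steinbergComp R κ γ : Submodule R (GrpdMor Obj → R)) : Set (GrpdMor Obj → R))
          ((steinbergComp R κ δ : Submodule R (GrpdMor Obj → R)) : Set (GrpdMor Obj → R)) ⊆
          (LinearMap.ker (LinearMap.proj m : (GrpdMor Obj → R) →ₗ[R] R) : Set (GrpdMor Obj → R)) :=
        fun g hg => h g hg
      exact hFm (Submodule.span_le.mpr hle hFmem)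
    obtain ⟨c, hc, hcm⟩ := hgen
    rw [Set.mem_image2] at hc
    obtain ⟨f₁, hf₁, f₂, hf₂, rfl⟩ := hc
    rw [conv] at hcm
    obtain ⟨q, ⟨hq, hqm⟩, hne⟩ := exists_ne_zero_of_finsum_mem_ne_zero hcm
    obtain ⟨⟨x, y, f⟩, ⟨y', z, g⟩⟩ := q
    simp only at hq
    subst hq
    simp only [morComp, eqToHom_refl, Category.id_comp] at hqm
    have h1 : f₁ ⟨x, y, f⟩ ≠ 0 := left_ne_zero_of_mul hne
    have h2 : f₂ ⟨y, z, g⟩ ≠ 0 := right_ne_zero_of_mul hne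
    exact ⟨x, y, z, f, g, hf₁.2 _ h1, hf₂.2 _ h2, hqm.symm⟩
end

section
/- Let E be a directed graph. The boundary path groupoid G_E with its canonical ℤ-grading is strongly graded if and only if E is row-finite, has no sinks, and satisfies Condition (Y): for every k ∈ ℕ and every infinite path p, there exists an initial subpath α of p and a finite path β with r(β) = r(α) and |β| − |α| = k. -/
/-! Directed graphs: vertex type `V`, edge type `E`, source map `es` and range map `er`. -/

/-- `IsPathFrom es er v l` : the list of edges `l` forms a path starting at vertex `v`
(consecutive edges match up). -/
def IsPathFrom {V E : Type*} (es er : E → V) : V → List E → Prop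
  | _, [] => True
  | v, e :: l => es e = v ∧ IsPathFrom es er (er e) l

/-- The end (range) vertex of the finite path `(v, l)`. -/
def endVertex {V E : Type*} (er : E → V) (v : V) (l : List E) : V :=
  (l.getLast?).elim v er

/-- A sink: a vertex emitting no edges. -/
def IsSink {V E : Type*} (es : E → V) (v : V) : Prop := ¬ ∃ e, es e = v

/-- An infinite emitter: a vertex emitting infinitely many edges. -/
def IsInfiniteEmitter {V E : Type*} (es : E → V) (v : V) : Prop :=
  {e | es e = v}.Infinite

/-- A singular vertex: a sink or an infinite emitter. -/
def IsSingular {V E : Type*} (es : E → V) (v : V) : Prop :=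
  IsSink es v ∨ IsInfiniteEmitter es v

/-- The graph is row-finite: every vertex emits only finitely many edges. -/
def RowFinite {V E : Type*} (es : E → V) : Prop := ∀ v, {e | es e = v}.Finite

/-- An infinite path, recorded as a sequence of consecutively composable edges. -/
def IsInfPath {V E : Type*} (es er : E → V) (x : ℕ → E) : Prop :=
  ∀ n, er (x n) = es (x (n + 1))

/-- `HasPathTo es er u k` : there is a finite path of length `k` with range `u`. -/
def HasPathTo {V E : Type*} (es er : E → V) (u : V) (k : ℕ) : Prop :=
  ∃ (w : V) (l : List E), IsPathFrom es er w l ∧ endVertex er w l = u ∧ l.length = k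

/-- A finite boundary path `(v, l)` lies in `d((G_E)_n)`: it factors as `β x` with `β` an
initial subpath (of length `m`) and there is a path `α` with `r α = s x` and `|α| - |β| = n`,
giving the morphism `(α x, n, β x)` of `G_E`. -/
def FinPathInD {V E : Type*} (es er : E → V) (v : V) (l : List E) (n : ℤ) : Prop :=
  ∃ m ≤ l.length, ∃ k : ℕ, (k : ℤ) = (m : ℤ) + n ∧
    HasPathTo es er (endVertex er v (l.take m)) k

/-- An infinite path `x` lies in `d((G_E)_n)`. -/
def InfPathInD {V E : Type*} (es er : E → V) (x : ℕ → E) (n : ℤ) : Prop :=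
  ∃ (m k : ℕ), (k : ℤ) = (m : ℤ) + n ∧ HasPathTo es er (es (x m)) k

/-- The boundary path groupoid `G_E` is strongly `ℤ`-graded: every boundary path (a finite
path ending at a singular vertex, or an infinite path) lies in `d((G_E)_n)` for every `n`. -/
def StronglyGradedZ {V E : Type*} (es er : E → V) : Prop :=
  ∀ n : ℤ,
    (∀ (v : V) (l : List E), IsPathFrom es er v l → IsSingular es (endVertex er v l) →
      FinPathInD es er v l n) ∧
    (∀ x : ℕ → E, IsInfPath es er x → InfPathInD es er x n)

/-- Condition (Y): for every `k ∈ ℕ` and every infinite path `p`, there is an initial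
subpath `α` of `p` (of some length `m`) and a finite path `β` with `r β = r α` and
`|β| - |α| = k`. -/
def CondY {V E : Type*} (es er : E → V) : Prop :=
  ∀ (k : ℕ) (x : ℕ → E), IsInfPath es er x → ∃ m : ℕ, HasPathTo es er (es (x m)) (m + k)

/-- For a directed graph `E`, the boundary path groupoid `G_E` with its
canonical `ℤ`-grading is strongly graded iff `E` is row-finite, has no sinks, and satisfies
Condition (Y). -/
theorem stmt9 {V E : Type*} (es er : E → V) :
    StronglyGradedZ es er ↔
      (RowFinite es ∧ (∀ v : V, ∃ e, es e = v) ∧ CondY es er) := by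
  constructor
  · intro h
    have hns : ∀ v : V, ¬ IsSingular es v := by
      intro v hv
      obtain ⟨m, hm, k, hk, -⟩ := (h (-1)).1 v [] trivial hv
      simp only [List.length_nil, Nat.le_zero] at hm
      omega
    refine ⟨?_, ?_, ?_⟩
    · intro v
      by_contra hf
      exact hns v (Or.inr hf)
    · intro v
      by_contra he
      exact hns v (Or.inl he)
    · intro k x hx
      obtain ⟨m, k', hk', hp⟩ := (h k).2 x hx
      have hk2 : k' = m + k := by omega
      exact ⟨m, hk2 ▸ hp⟩
  · rintro ⟨hrf, hne, hY⟩ n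
    constructor
    · intro v l _ hsing
      rcases hsing with hs | hi
      · exact absurd (hne _) hs
      · exact hi (hrf _) |>.elim
    · intro x hx
      rcases le_or_gt 0 n with hn | hn
      · obtain ⟨m, hp⟩ := hY n.toNat x hx
        exact ⟨m, m + n.toNat, by omega, hp⟩
      · exact ⟨(-n).toNat, 0, by omega, es (x (-n).toNat), [], trivial, rfl, rfl⟩
end

section
/- Let E be a directed graph with a singular vertex (a sink or an infinite emitter). Then the boundary path groupoid G_E is not strongly ℤ-graded. -/
/-- If a directed graph `E` has a singular vertex (a sink or an infinite
emitter), then the boundary path groupoid `G_E` is not strongly `ℤ`-graded. -/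
theorem stmt10 {V E : Type*} (es er : E → V)
    (h : ∃ v : V, IsSingular es v) :
    ¬ StronglyGradedZ es er := by
  obtain ⟨v, hv⟩ := h
  intro hsg
  obtain ⟨m, hm, k, hk, -⟩ := (hsg (-1)).1 v [] trivial (by simpa [endVertex] using hv)
  simp only [List.length_nil, Nat.le_zero] at hm
  omega
end

section
/- Let E be a directed graph that is row-finite, has no sinks, and satisfies Condition (Y). Then for every boundary path p ∈ ∂E and every n ∈ ℤ, p lies in c((G_E)_n), i.e., there exists a morphism of degree n in the boundary path groupoid with codomain p. -/
/-- A finite boundary path `(v, l)` lies in `c((G_E)_n)`: it factors as `α x` with `α` an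
initial subpath (of length `m`), and there is a path `β` with `r β = s x` and
`|α| - |β| = n`, giving the morphism `(α x, n, β x)` with codomain the given path. -/
def FinPathInC {V E : Type*} (es er : E → V) (v : V) (l : List E) (n : ℤ) : Prop :=
  ∃ m ≤ l.length, ∃ k : ℕ, (k : ℤ) = (m : ℤ) - n ∧
    HasPathTo es er (endVertex er v (l.take m)) k

/-- An infinite path `x` lies in `c((G_E)_n)`. -/
def InfPathInC {V E : Type*} (es er : E → V) (x : ℕ → E) (n : ℤ) : Prop :=
  ∃ (m k : ℕ), (k : ℤ) = (m : ℤ) - n ∧ HasPathTo es er (es (x m)) k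

/-- If `E` is row-finite, has no sinks, and satisfies Condition (Y), then
every boundary path `p ∈ ∂E` lies in `c((G_E)_n)` for every `n ∈ ℤ`, i.e. there is a
morphism of degree `n` in the boundary path groupoid with codomain `p`. -/
theorem stmt11 {V E : Type*} (es er : E → V)
    (hrf : RowFinite es) (hns : ∀ v : V, ∃ e, es e = v) (hY : CondY es er) :
    (∀ (v : V) (l : List E), IsPathFrom es er v l → IsSingular es (endVertex er v l) →
      ∀ n : ℤ, FinPathInC es er v l n) ∧
    (∀ x : ℕ → E, IsInfPath es er x → ∀ n : ℤ, InfPathInC es er x n) := by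
  constructor
  · intro v l _ hsing n
    rcases hsing with hs | hi
    · exact absurd (hns _) hs
    · exact absurd (hrf _) hi
  · intro x hx n
    rcases le_or_gt n 0 with hn | hn
    · obtain ⟨m, hm⟩ := hY (-n).toNat x hx
      refine ⟨m, m + (-n).toNat, ?_, hm⟩
      push_cast [Int.toNat_of_nonneg (neg_nonneg.mpr hn)]
      ring
    · refine ⟨n.toNat, 0, ?_, es (x n.toNat), [], trivial, rfl, rfl⟩
      rw [Int.toNat_of_nonneg hn.le]; ring
end

section
/- Let E be a directed graph and n ≥ 1. The boundary path groupoid G_E, with the quotient ℤ/nℤ-grading induced from its canonical ℤ-grading, is strongly ℤ/nℤ-graded if and only if every singular vertex of E receives a path of length n−1. -/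
/-- The boundary path groupoid `G_E` is strongly `ℤ/nℤ`-graded with the quotient grading:
every boundary path lies in `d(G_{[j]})` for every class `[j]`, i.e. in `d((G_E)_{j'})` for
some integer `j'` congruent to `j` mod `n`. -/
def StronglyGradedMod {V E : Type*} (es er : E → V) (n : ℕ) : Prop :=
  ∀ j : ℤ,
    (∀ (v : V) (l : List E), IsPathFrom es er v l → IsSingular es (endVertex er v l) →
      ∃ j' : ℤ, (j' : ZMod n) = (j : ZMod n) ∧ FinPathInD es er v l j') ∧
    (∀ x : ℕ → E, IsInfPath es er x →
      ∃ j' : ℤ, (j' : ZMod n) = (j : ZMod n) ∧ InfPathInD es er x j')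

section helpers
variable {V E : Type*} (es er : E → V)

theorem endVertex_cons (v : V) (e : E) (l : List E) :
    endVertex er v (e :: l) = endVertex er (er e) l := by
  cases l with
  | nil => rfl
  | cons f l => simp [endVertex, List.getLast?]

theorem isPathFrom_drop : ∀ (l : List E) (v : V) (m : ℕ), IsPathFrom es er v l →
    IsPathFrom es er (endVertex er v (l.take m)) (l.drop m)
  | [], v, m, _ => by simp [endVertex]; trivial
  | e :: l, v, 0, h => h
  | e :: l, v, m+1, h => by
    simpa [endVertex_cons] using isPathFrom_drop l (er e) m h.2

theorem endVertex_take_drop : ∀ (l : List E) (v : V) (m : ℕ),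
    endVertex er (endVertex er v (l.take m)) (l.drop m) = endVertex er v l
  | [], v, m => by simp [endVertex]
  | e :: l, v, 0 => rfl
  | e :: l, v, m+1 => by
    simpa [endVertex_cons] using endVertex_take_drop l (er e) m

theorem hasPathTo_mono {u : V} {k : ℕ} (h : HasPathTo es er u k) {j : ℕ} (hj : j ≤ k) :
    HasPathTo es er u j := by
  obtain ⟨w, l, hp, he, hl⟩ := h
  refine ⟨endVertex er w (l.take (k - j)), l.drop (k - j),
    isPathFrom_drop es er l w _ hp, by rw [endVertex_take_drop, he], by simp [hl]; omega⟩

theorem hasPathTo_init {x : ℕ → E} (hx : IsInfPath es er x) (m : ℕ) :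
    HasPathTo es er (es (x m)) m := by
  suffices h : ∀ (m i : ℕ), IsPathFrom es er (es (x i)) ((List.range m).map fun j => x (i + j)) ∧
      endVertex er (es (x i)) ((List.range m).map fun j => x (i + j)) = es (x (i + m)) by
    obtain ⟨h1, h2⟩ := h m 0
    exact ⟨es (x 0), _, h1, by simpa using h2, by simp⟩
  intro m
  induction m with
  | zero => intro i; exact ⟨trivial, by simp [endVertex]⟩
  | succ m ih =>
    intro i
    rw [List.range_succ_eq_map]
    obtain ⟨h1, h2⟩ := ih (i + 1)
    have hc : ∀ g : List E, (0 :: List.map Nat.succ (List.range m)).map (fun j => x (i + j)) =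
        x i :: (List.range m).map fun j => x ((i+1) + j) := by
      intro; simp [List.map_map, Function.comp]; intro a _; congr 1; omega
    rw [hc []]
    constructor
    · exact ⟨rfl, by rw [hx i]; exact h1⟩
    · rw [endVertex_cons, hx i, h2, show i + 1 + m = i + (m + 1) from by omega]

end helpers

/-- For `n ≥ 1`, the boundary path groupoid `G_E` with the quotient
`ℤ/nℤ`-grading is strongly graded iff every singular vertex receives a path of
length `n - 1`. -/
theorem stmt12 {V E : Type*} (es er : E → V) (n : ℕ) (hn : 1 ≤ n) :
    StronglyGradedMod es er n ↔
      (∀ v : V, IsSingular es v → HasPathTo es er v (n - 1)) := by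
  constructor
  · intro h v hv
    obtain ⟨j', hj', m, hm, k, hk, hp⟩ := (h ((n : ℤ) - 1)).1 v [] trivial hv
    have hm0 : m = 0 := by simpa using hm
    subst hm0
    simp only [List.take_nil] at hp
    -- (k:ℤ) = j', j' ≡ n-1 [ZMod n], so k ≥ n-1
    have hd : (n : ℤ) ∣ ((n : ℤ) - 1) - (k : ℤ) := by
      have : ((k : ℤ) : ZMod n) = (((n : ℤ) - 1 : ℤ) : ZMod n) := by
        rw [hk]; simpa using hj'
      exact ((ZMod.intCast_eq_intCast_iff _ _ _).mp this).dvd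
    obtain ⟨t, ht⟩ := hd
    have hkge : n - 1 ≤ k := by
      rcases le_or_gt t 0 with h0 | h0
      · have : (n:ℤ) * t ≤ 0 := mul_nonpos_of_nonneg_of_nonpos (by positivity) h0
        omega
      · have : (n:ℤ) ≤ (n:ℤ) * t := le_mul_of_one_le_right (by positivity) (by omega)
        omega
    exact hasPathTo_mono es er hp hkge
  · intro h j
    have hn0 : (0:ℤ) < n := by exact_mod_cast hn
    constructor
    · intro v l hl hs
      set L := l.length with hL
      set k : ℕ := ((j + L) % n).toNat with hkdef
      have hke : (k : ℤ) = (j + L) % n := Int.toNat_of_nonneg (Int.emod_nonneg _ (by omega))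
      have hklt : (k : ℤ) < n := by rw [hke]; exact Int.emod_lt_of_pos _ hn0
      refine ⟨(k : ℤ) - L, ?_, L, le_refl _, k, by ring, ?_⟩
      · rw [hke]
        push_cast [ZMod.intCast_mod]
        ring
      · rw [List.take_length]
        exact hasPathTo_mono es er (h _ hs) (by omega)
    · intro x hx
      set k : ℕ := ((j + ((n:ℤ) - 1)) % n).toNat with hkdef
      have hke : (k : ℤ) = (j + ((n:ℤ)-1)) % n := Int.toNat_of_nonneg (Int.emod_nonneg _ (by omega))
      have hklt : (k : ℤ) < n := by rw [hke]; exact Int.emod_lt_of_pos _ hn0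
      refine ⟨(k : ℤ) - ((n:ℤ) - 1), ?_, n - 1, k, ?_, ?_⟩
      · rw [hke]; push_cast [ZMod.intCast_mod]; ring
      · have : ((n - 1 : ℕ) : ℤ) = (n : ℤ) - 1 := by omega
        rw [this]; ring
      · exact hasPathTo_mono es er (hasPathTo_init es er hx (n-1)) (by omega)
end

section
/- Let E be a row-finite directed graph. The boundary path groupoid G_E is strongly ℤ/2ℤ-graded (with the quotient grading) if and only if E has no isolated vertex. -/

lemma hasPathTo_zero {V E : Type*} (es er : E → V) (u : V) : HasPathTo es er u 0 :=
  ⟨u, [], trivial, rfl, rfl⟩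

lemma emod_of_cast_eq {a b : ℤ} (h : (a : ZMod 2) = (b : ZMod 2)) : a % 2 = b % 2 :=
  (ZMod.intCast_eq_intCast_iff a b 2).mp h

lemma cast_eq_of_emod {a b : ℤ} (h : a % 2 = b % 2) : (a : ZMod 2) = (b : ZMod 2) :=
  (ZMod.intCast_eq_intCast_iff a b 2).mpr h

/-- For a row-finite graph `E`, the boundary path groupoid `G_E` is
strongly `ℤ/2ℤ`-graded (quotient grading) iff `E` has no isolated vertex
(a vertex neither emitting nor receiving edges). -/
theorem stmt13 {V E : Type*} (es er : E → V) (hrf : RowFinite es) :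
    StronglyGradedMod es er 2 ↔
      (∀ v : V, (∃ e, es e = v) ∨ (∃ e, er e = v)) := by
  constructor
  · intro h v
    by_contra hc
    push_neg at hc
    obtain ⟨hne, hnr⟩ := hc
    have hsink : IsSingular es (endVertex er v ([] : List E)) :=
      Or.inl (fun ⟨e, he⟩ => (hne e he).elim)
    obtain ⟨j', hj', m, hm, k, hk, w, l, hp, hend, hlen⟩ := (h 1).1 v [] trivial hsink
    have hm0 : m = 0 := Nat.le_zero.mp hm
    subst hm0
    have hk' : (k : ℤ) = j' := by simpa using hk
    have hmod := emod_of_cast_eq hj'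
    have hkpos : k ≠ 0 := by
      intro h0
      subst h0
      omega
    have hl : l ≠ [] := by
      intro h0
      subst h0
      simp at hlen
      exact hkpos hlen.symm
    have hlast : l.getLast? = some (l.getLast hl) := List.getLast?_eq_getLast hl
    have : er (l.getLast hl) = v := by
      have : endVertex er w l = er (l.getLast hl) := by
        simp [endVertex, hlast]
      rw [this] at hend
      simpa [endVertex] using hend
    exact hnr (l.getLast hl) this
  · intro h j
    constructor
    · intro v l hpath hsing
      rcases Int.even_or_odd j with ⟨t, ht⟩ | ⟨t, ht⟩
      · exact ⟨0, cast_eq_of_emod (by omega), 0, Nat.zero_le _, 0, by norm_num,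
          hasPathTo_zero es er _⟩
      · rcases l with _ | ⟨e, l'⟩
        · -- empty path; end vertex is v, singular, row-finite ⇒ sink ⇒ receives an edge
          have hsv : IsSink es (endVertex er v ([] : List E)) := by
            rcases hsing with hs | hi
            · exact hs
            · exact (hi (hrf _)).elim
          have hrec : ∃ e, er e = endVertex er v ([] : List E) := by
            rcases h (endVertex er v ([] : List E)) with he | hre
            · exact (hsv he).elim
            · exact hre
          obtain ⟨e, he⟩ := hrec
          refine ⟨1, cast_eq_of_emod (by omega), 0, Nat.zero_le _, 1, by norm_num,
            ⟨es e, [e], ⟨rfl, trivial⟩, ?_, rfl⟩⟩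
          simpa [endVertex] using he
        · -- nonempty path: take m = 1, k = 0, j' = -1
          exact ⟨-1, cast_eq_of_emod (by omega), 1, by simp, 0, by norm_num,
            hasPathTo_zero es er _⟩
    · intro x hx
      rcases Int.even_or_odd j with ⟨t, ht⟩ | ⟨t, ht⟩
      · exact ⟨0, cast_eq_of_emod (by omega), 0, 0, by norm_num, hasPathTo_zero es er _⟩
      · exact ⟨-1, cast_eq_of_emod (by omega), 1, 0, by norm_num, hasPathTo_zero es er _⟩
end

section
/- Let E be a row-finite directed graph with no sinks. Then for every n ≥ 1, the boundary path groupoid G_E is strongly ℤ/nℤ-graded with the quotient grading. -/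
/-- If `E` is a row-finite graph with no sinks, then for every `n ≥ 1`
the boundary path groupoid `G_E` is strongly `ℤ/nℤ`-graded with the quotient grading. -/
theorem stmt14 {V E : Type*} (es er : E → V)
    (hrf : RowFinite es) (hns : ∀ v : V, ∃ e, es e = v) :
    ∀ n : ℕ, 1 ≤ n → StronglyGradedMod es er n := by
  intro n hn j
  constructor
  · intro v l _ hsing
    exfalso
    rcases hsing with hs | hie
    · exact hs (hns _)
    · exact hie (hrf _)
  · intro x _
    set t : ℕ := ((-j) % (n : ℤ)).toNat with ht
    have hnpos : (0 : ℤ) < (n : ℤ) := by exact_mod_cast hn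
    have htnn : (0 : ℤ) ≤ (-j) % (n : ℤ) := Int.emod_nonneg _ (by omega)
    have htcast : (t : ℤ) = (-j) % (n : ℤ) := Int.toNat_of_nonneg htnn
    refine ⟨-(t : ℤ), ?_, t, 0, by omega, es (x t), [], trivial, rfl, rfl⟩
    push_cast [htcast]
    ring
end
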